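/- arXiv:0905.0294 — 2 statements merged into one kernel-verified Lean document; each statement's English description precedes it below -/
import Mathlib

section
/- For every real x ≥ 1, the number N₊(x) of positive integers n ≤ x with μ(n) = 1 satisfies N₊(x) = M(√x) − (1/2)·Σ_{i,j=1}^{⌊√x⌋} μ(i)·μ(j)·⌊x/(i·j)⌋ + (1/2)·Σ_{i=1}^{⌊√x⌋} μ(i)·⌊x/i²⌋. -/
/-!
Write `N = ⌊x⌋` and `K = ⌊√x⌋ = ⌊√N⌋`, so that `⌊x / m⌋ = ⌊N / m⌋`. Since
`∑_{b ≤ M} μ(b) ⌊M / b⌋ = ∑_{n ≤ M} ∑_{d ∣ n} μ(d) = 1` for `M ≥ 1`, the sum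
`S(s, t) = ∑_{a ∈ s, b ∈ t} μ(a) μ(b) ⌊N / (a b)⌋` satisfies `S(s, [1, N]) = ∑_{a ∈ s} μ(a)`.
Splitting `[1, N] = [1, K] ∪ (K, N]` and noting `S((K, N], (K, N]) = 0` because `(K + 1)² > N`
gives the hyperbola identity `S([1, K], [1, K]) = 2 M(K) - M(N)`. Likewise
`∑_{d ≤ K} μ(d) ⌊N / d²⌋ = ∑_{n ≤ N} ∑_{d² ∣ n} μ(d)` counts the squarefree `n ≤ N`.
Since `μ(n) + [n squarefree] = 2 [μ(n) = 1]`, adding the two identities gives `2 N₊(x)`.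
-/

open ArithmeticFunction Finset

noncomputable def Mertens (x : ℝ) : ℤ := ∑ k ∈ Finset.Icc 1 ⌊x⌋₊, moebius k

noncomputable def Nplus (x : ℝ) : ℕ := ((Finset.Icc 1 ⌊x⌋₊).filter (fun n => moebius n = 1)).card

noncomputable def Nminus (x : ℝ) : ℕ := ((Finset.Icc 1 ⌊x⌋₊).filter (fun n => moebius n = -1)).card

noncomputable def Nzero (x : ℝ) : ℕ := ((Finset.Icc 1 ⌊x⌋₊).filter (fun n => moebius n = 0)).card

noncomputable def Qsf (x : ℝ) : ℕ := ((Finset.Icc 1 ⌊x⌋₊).filter (fun n => moebius n ≠ 0)).card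

open scoped ArithmeticFunction.Moebius

theorem sum_divisors_moebius (n : ℕ) :
    ∑ d ∈ n.divisors, (μ d : ℤ) = if n = 1 then 1 else 0 := by
  rw [← coe_mul_zeta_apply, moebius_mul_coe_zeta, one_apply]

theorem sum_mul_div_eq_sum_sum_filter_dvd {R : Type*} [NonAssocSemiring R] (f : ℕ → R)
    (g : ℕ → ℕ) (s : Finset ℕ) (M : ℕ) :
    ∑ d ∈ s, f d * (M / g d : ℕ) = ∑ n ∈ Ioc 0 M, ∑ d ∈ s with g d ∣ n, f d := by
  simp_rw [← Nat.Ioc_filter_dvd_card_eq_div, ← nsmul_eq_mul', ← sum_const, sum_filter]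
  exact sum_comm

theorem sum_moebius_mul_div {M L : ℕ} (h : M ≤ L) :
    ∑ d ∈ Ioc 0 L, (μ d : ℤ) * (M / d : ℕ) = if M = 0 then 0 else 1 := by
  refine (sum_mul_div_eq_sum_sum_filter_dvd (fun d => (μ d : ℤ)) id _ M).trans ?_
  have hdiv : ∀ n ∈ Ioc 0 M, {d ∈ Ioc 0 L | id d ∣ n} = n.divisors := by
    intro n hn
    rw [mem_Ioc] at hn
    ext d
    simp only [mem_filter, mem_Ioc, id, Nat.mem_divisors]
    constructor
    · rintro ⟨-, hd⟩; exact ⟨hd, by omega⟩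
    · rintro ⟨hd, -⟩
      exact ⟨⟨Nat.pos_of_dvd_of_pos hd hn.1, (Nat.le_of_dvd hn.1 hd).trans (hn.2.trans h)⟩, hd⟩
  rw [sum_congr rfl fun n hn => by rw [hdiv n hn, sum_divisors_moebius], sum_ite_eq']
  simp only [mem_Ioc]
  split_ifs <;> omega

theorem Nat.dvd_of_mul_self_dvd_sq_mul {a b d : ℕ} (ha : Squarefree a) (h : d * d ∣ b ^ 2 * a) :
    d ∣ b := by
  rcases eq_or_ne b 0 with rfl | hb
  · exact dvd_zero d
  obtain ⟨g, d', b', hg, hcop, rfl, rfl⟩ :=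
    Nat.exists_coprime' (Nat.gcd_pos_of_pos_right d (Nat.pos_of_ne_zero hb))
  have h' : d' * d' ∣ b' ^ 2 * a := by
    refine Nat.dvd_of_mul_dvd_mul_left (Nat.pos_of_ne_zero (pow_ne_zero 2 hg.ne')) ?_
    convert h using 1 <;> ring
  have hd' : d' * d' ∣ a := ((hcop.mul_left hcop).pow_right 2).dvd_of_dvd_mul_left h'
  rw [Nat.isUnit_iff.mp (ha d' hd'), one_mul]
  exact dvd_mul_left g b'

theorem sum_filter_mul_self_dvd_moebius (n : ℕ) :
    ∑ d ∈ n.divisors with d * d ∣ n, (μ d : ℤ) = if Squarefree n then 1 else 0 := by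
  rcases eq_or_ne n 0 with rfl | hn
  · simp
  obtain ⟨a, b, rfl, ha⟩ := Nat.sq_mul_squarefree n
  have hb : b ≠ 0 := by rintro rfl; simp at hn
  have hdvd (d : ℕ) : d * d ∣ b ^ 2 * a ↔ d ∣ b :=
    ⟨Nat.dvd_of_mul_self_dvd_sq_mul ha, fun hd => sq b ▸ (mul_dvd_mul hd hd).mul_right a⟩
  have hfilter : {d ∈ (b ^ 2 * a).divisors | d * d ∣ b ^ 2 * a} = b.divisors := by
    ext d
    simp only [mem_filter, Nat.mem_divisors, hdvd]
    constructor
    · rintro ⟨-, hd⟩; exact ⟨hd, hb⟩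
    · rintro ⟨hd, -⟩; exact ⟨⟨hd.trans ⟨b * a, by ring⟩, hn⟩, hd⟩
  have hsqf : Squarefree (b ^ 2 * a) ↔ b = 1 := by
    constructor
    · intro h
      exact Nat.isUnit_iff.mp (h b ((hdvd b).mpr dvd_rfl))
    · rintro rfl
      simpa using ha
  rw [hfilter, sum_divisors_moebius]
  exact if_congr hsqf.symm rfl rfl

def moebiusPairSum (N : ℕ) (s t : Finset ℕ) : ℤ :=
  ∑ a ∈ s, ∑ b ∈ t, μ a * μ b * (N / (a * b) : ℕ)

namespace moebiusPairSum

variable {N : ℕ} {s s' t t' : Finset ℕ}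

theorem comm : moebiusPairSum N s t = moebiusPairSum N t s := by
  unfold moebiusPairSum
  rw [sum_comm]
  simp only [mul_comm]

theorem union_left (h : Disjoint s s') :
    moebiusPairSum N (s ∪ s') t = moebiusPairSum N s t + moebiusPairSum N s' t :=
  sum_union h

theorem union_right (h : Disjoint t t') :
    moebiusPairSum N s (t ∪ t') = moebiusPairSum N s t + moebiusPairSum N s t' := by
  rw [comm, union_left h, comm, comm (s := t')]

theorem eq_zero_of_lt_mul (h : ∀ a ∈ s, ∀ b ∈ t, N < a * b) : moebiusPairSum N s t = 0 :=
  sum_eq_zero fun a ha => sum_eq_zero fun b hb => by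
    rw [Nat.div_eq_of_lt (h a ha b hb)]
    simp

theorem Ioc_zero_right (hs : s ⊆ Ioc 0 N) : moebiusPairSum N s (Ioc 0 N) = ∑ a ∈ s, μ a := by
  refine sum_congr rfl fun a ha => ?_
  have ha := mem_Ioc.mp (hs ha)
  simp_rw [mul_assoc, ← mul_sum, ← Nat.div_div_eq_div_mul,
    sum_moebius_mul_div (Nat.div_le_self N a), (Nat.div_pos ha.2 ha.1).ne', if_false, mul_one]

end moebiusPairSum

theorem moebiusPairSum_Ioc_sqrt (N : ℕ) :
    moebiusPairSum N (Ioc 0 N.sqrt) (Ioc 0 N.sqrt)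
      = 2 * ∑ k ∈ Ioc 0 N.sqrt, μ k - ∑ k ∈ Ioc 0 N, μ k := by
  set K := N.sqrt
  have hKN : K ≤ N := Nat.sqrt_le_self N
  have hunion : Ioc 0 K ∪ Ioc K N = Ioc 0 N := Ioc_union_Ioc_eq_Ioc K.zero_le hKN
  have hdisj : Disjoint (Ioc 0 K) (Ioc K N) := Ioc_disjoint_Ioc_of_le le_rfl
  have hlarge : moebiusPairSum N (Ioc K N) (Ioc K N) = 0 :=
    moebiusPairSum.eq_zero_of_lt_mul fun a ha b hb => by
      rw [mem_Ioc] at ha hb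
      exact (Nat.lt_succ_sqrt N).trans_le (Nat.mul_le_mul ha.1 hb.1)
  have hfull := moebiusPairSum.Ioc_zero_right (N := N) subset_rfl
  have htail := moebiusPairSum.Ioc_zero_right (N := N) (Ioc_subset_Ioc_left K.zero_le)
  have hsplit := sum_Ioc_consecutive (fun k => μ k) K.zero_le hKN
  rw [← hunion, moebiusPairSum.union_right hdisj, hlarge] at htail
  rw [← hunion, moebiusPairSum.union_left hdisj, moebiusPairSum.union_right hdisj,
    moebiusPairSum.union_right hdisj, hlarge, moebiusPairSum.comm (s := Ioc 0 K) (t := Ioc K N),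
    hunion] at hfull
  linarith

theorem sum_Ioc_sqrt_moebius_mul_div_mul_self (N : ℕ) :
    ∑ d ∈ Ioc 0 N.sqrt, (μ d : ℤ) * (N / (d * d) : ℕ) = #{n ∈ Ioc 0 N | Squarefree n} := by
  rw [sum_mul_div_eq_sum_sum_filter_dvd (fun d => (μ d : ℤ)) (fun d => d * d), ← sum_boole]
  refine sum_congr rfl fun n hn => ?_
  rw [mem_Ioc] at hn
  rw [← sum_filter_mul_self_dvd_moebius]
  congr 1
  ext d
  simp only [mem_filter, mem_Ioc, Nat.mem_divisors]
  constructor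
  · rintro ⟨-, hd⟩
    exact ⟨⟨(Dvd.intro _ rfl).trans hd, by omega⟩, hd⟩
  · rintro ⟨⟨hd, -⟩, hdd⟩
    refine ⟨⟨Nat.pos_of_dvd_of_pos hd hn.1, ?_⟩, hdd⟩
    exact Nat.le_sqrt.mpr ((Nat.le_of_dvd hn.1 hdd).trans hn.2)

theorem moebius_add_ite_squarefree (n : ℕ) :
    μ n + (if Squarefree n then 1 else 0) = 2 * if μ n = 1 then 1 else 0 := by
  rcases moebius_eq_or n with h | h | h <;> simp [h, ← moebius_ne_zero_iff_squarefree]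

theorem sum_moebius_add_card_squarefree (s : Finset ℕ) :
    ∑ n ∈ s, μ n + #{n ∈ s | Squarefree n} = 2 * #{n ∈ s | μ n = 1} := by
  simp only [← sum_boole, mul_sum, ← sum_add_distrib, moebius_add_ite_squarefree]

theorem Real.floor_sqrt_eq_sqrt_floor {x : ℝ} (hx : 0 ≤ x) : ⌊√x⌋₊ = ⌊x⌋₊.sqrt := by
  rw [Nat.eq_sqrt, Nat.le_floor_iff hx, Nat.floor_lt hx]
  have h₁ := Nat.floor_le (Real.sqrt_nonneg x)
  have h₂ := Nat.lt_floor_add_one √x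
  constructor
  · push_cast
    calc (⌊√x⌋₊ : ℝ) * ⌊√x⌋₊ ≤ √x * √x := by gcongr
      _ = x := Real.mul_self_sqrt hx
  · push_cast
    calc x = √x * √x := (Real.mul_self_sqrt hx).symm
      _ < (⌊√x⌋₊ + 1) * (⌊√x⌋₊ + 1) := by gcongr

theorem Int.floor_div_natCast_eq_natFloor_div {x : ℝ} (hx : 0 ≤ x) (m : ℕ) :
    ⌊x / m⌋ = ((⌊x⌋₊ / m : ℕ) : ℤ) := by
  rw [Int.floor_div_natCast, ← Int.natCast_floor_eq_floor hx, Int.natCast_div]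

theorem stmt6 (x : ℝ) (hx : 1 ≤ x) :
    (Nplus x : ℚ) = (Mertens (Real.sqrt x) : ℚ) -
      (1 / 2) * ∑ i ∈ Finset.Icc 1 ⌊Real.sqrt x⌋₊, ∑ j ∈ Finset.Icc 1 ⌊Real.sqrt x⌋₊,
        (moebius i * moebius j * ⌊x / (i * j : ℝ)⌋ : ℚ) +
      (1 / 2) * ∑ i ∈ Finset.Icc 1 ⌊Real.sqrt x⌋₊, (moebius i * ⌊x / (i ^ 2 : ℝ)⌋ : ℚ) := by
  have hx₀ : 0 ≤ x := zero_le_one.trans hx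
  have hIcc (M : ℕ) : Icc 1 M = Ioc 0 M := Icc_add_one_left_eq_Ioc 0 M
  have hfloor (m : ℕ) : ⌊x / m⌋ = ((⌊x⌋₊ / m : ℕ) : ℤ) :=
    Int.floor_div_natCast_eq_natFloor_div hx₀ m
  have hpair := moebiusPairSum_Ioc_sqrt ⌊x⌋₊
  have hsqf := sum_Ioc_sqrt_moebius_mul_div_mul_self ⌊x⌋₊
  have hcount := sum_moebius_add_card_squarefree (Ioc 0 ⌊x⌋₊)
  rw [moebiusPairSum] at hpair
  simp only [Nplus, Mertens, Real.floor_sqrt_eq_sqrt_floor hx₀, hIcc, ← Nat.cast_mul, sq, hfloor]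
  rify at hpair hsqf hcount ⊢
  linarith
end

section
/- For every integer x ≥ 2, Σ_{i=1}^{⌊√x⌋} Σ_{j=1}^{⌊√x⌋} μ(i)·μ(j)·[i·j divides x] = −μ(x); equivalently, Σ_{i·j divides x, 1 ≤ i,j ≤ ⌊√x⌋} μ(i)·μ(j) = −μ(x). -/
open ArithmeticFunction Finset

lemma sum_moebius_divisors' (n : ℕ) :
    (∑ d ∈ n.divisors, moebius d) = if n = 1 then 1 else 0 := by
  have h : (moebius * ((zeta : ArithmeticFunction ℕ) : ArithmeticFunction ℤ) : ArithmeticFunction ℤ) n = (1 : ArithmeticFunction ℤ) n := by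
    rw [moebius_mul_coe_zeta]
  rw [coe_mul_zeta_apply, one_apply] at h
  exact h

lemma gfull (x : ℕ) (hx : 2 ≤ x) (i : ℕ) :
    (∑ j ∈ Finset.Icc 1 x, moebius j * (if (i * j) ∣ x then (1:ℤ) else 0))
      = if i = x then 1 else 0 := by
  by_cases hix : i ∣ x
  · have hi0 : 0 < i := Nat.pos_of_dvd_of_pos hix (by omega)
    obtain ⟨m, hm⟩ := hix
    have hm0 : 0 < m := by
      rcases Nat.eq_zero_or_pos m with h | h
      · subst h; simp at hm; omega
      · exact h
    have hmx : m ≤ x := by nlinarith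
    have hdvd : ∀ j : ℕ, (i * j ∣ x ↔ j ∣ m) := by
      intro j
      rw [hm]
      exact Nat.mul_dvd_mul_iff_left hi0
    have hrw : ∀ j ∈ Finset.Icc 1 x,
        moebius j * (if (i * j) ∣ x then (1:ℤ) else 0)
          = if j ∣ m then moebius j else 0 := by
      intro j _
      simp [hdvd j, mul_ite]
    rw [Finset.sum_congr rfl hrw, ← Finset.sum_filter]
    have hset : (Finset.Icc 1 x).filter (· ∣ m) = m.divisors := by
      ext j
      simp only [Finset.mem_filter, Finset.mem_Icc, Nat.mem_divisors]
      constructor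
      · rintro ⟨⟨h1, h2⟩, h3⟩
        exact ⟨h3, by omega⟩
      · rintro ⟨h1, _⟩
        have hj1 : 1 ≤ j := Nat.pos_of_dvd_of_pos h1 hm0
        have hj2 : j ≤ m := Nat.le_of_dvd hm0 h1
        exact ⟨⟨hj1, by omega⟩, h1⟩
    rw [hset, sum_moebius_divisors']
    congr 1
    simp only [eq_iff_iff]
    constructor
    · intro h; subst h; omega
    · intro h; subst h; nlinarith
  · have hne : i ≠ x := by rintro rfl; exact hix dvd_rfl
    rw [if_neg hne]
    apply Finset.sum_eq_zero
    intro j _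
    have : ¬ (i * j ∣ x) := fun h => hix (dvd_trans (Dvd.intro j rfl) h)
    simp [this]

theorem stmt14 (x : ℕ) (hx : 2 ≤ x) :
    (∑ i ∈ Finset.Icc 1 (Nat.sqrt x), ∑ j ∈ Finset.Icc 1 (Nat.sqrt x),
      moebius i * moebius j * (if (i * j) ∣ x then 1 else 0)) = -moebius x := by
  set s := Nat.sqrt x with hs
  have hsx : s < x := Nat.sqrt_lt_self (by omega)
  have hss : x < (s + 1) * (s + 1) := Nat.lt_succ_sqrt x
  have hsplit : ∀ g : ℕ → ℤ,
      (∑ j ∈ Finset.Icc 1 x, g j)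
        = (∑ j ∈ Finset.Icc 1 s, g j) + ∑ j ∈ Finset.Icc (s+1) x, g j := by
    intro g
    rw [show Finset.Icc 1 x = Finset.Ioc 0 x from (Finset.Icc_add_one_left_eq_Ioc 0 x).symm,
      show Finset.Icc 1 s = Finset.Ioc 0 s from (Finset.Icc_add_one_left_eq_Ioc 0 s).symm,
      Finset.Icc_add_one_left_eq_Ioc s x]
    exact (Finset.sum_Ioc_consecutive g (Nat.zero_le s) (le_of_lt hsx)).symm
  -- Step 1: full inner sum over j is zero for i ≤ s
  have step1 : ∀ i ∈ Finset.Icc 1 s,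
      (∑ j ∈ Finset.Icc 1 x, moebius i * moebius j * (if (i * j) ∣ x then (1:ℤ) else 0)) = 0 := by
    intro i hi
    simp only [Finset.mem_Icc] at hi
    have hine : i ≠ x := by omega
    calc (∑ j ∈ Finset.Icc 1 x, moebius i * moebius j * (if (i * j) ∣ x then (1:ℤ) else 0))
        = moebius i * ∑ j ∈ Finset.Icc 1 x, moebius j * (if (i * j) ∣ x then (1:ℤ) else 0) := by
          rw [Finset.mul_sum]; apply Finset.sum_congr rfl; intros; ring
      _ = moebius i * (if i = x then 1 else 0) := by rw [gfull x hx i]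
      _ = 0 := by rw [if_neg hine, mul_zero]
  -- Express LHS as minus the tail sum
  have key : (∑ i ∈ Finset.Icc 1 s, ∑ j ∈ Finset.Icc 1 s,
      moebius i * moebius j * (if (i * j) ∣ x then (1:ℤ) else 0))
      = - ∑ i ∈ Finset.Icc 1 s, ∑ j ∈ Finset.Icc (s+1) x,
          moebius i * moebius j * (if (i * j) ∣ x then (1:ℤ) else 0) := by
    have := Finset.sum_congr rfl step1
    rw [Finset.sum_const_zero] at this
    have h2 : (∑ i ∈ Finset.Icc 1 s, ∑ j ∈ Finset.Icc 1 x,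
        moebius i * moebius j * (if (i * j) ∣ x then (1:ℤ) else 0))
        = (∑ i ∈ Finset.Icc 1 s, ∑ j ∈ Finset.Icc 1 s,
            moebius i * moebius j * (if (i * j) ∣ x then (1:ℤ) else 0))
          + ∑ i ∈ Finset.Icc 1 s, ∑ j ∈ Finset.Icc (s+1) x,
            moebius i * moebius j * (if (i * j) ∣ x then (1:ℤ) else 0) := by
      rw [← Finset.sum_add_distrib]
      apply Finset.sum_congr rfl
      intro i _
      exact hsplit _
    rw [this] at h2
    linarith
  rw [key, Finset.sum_comm]
  -- Step 3: inner sums over i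
  have step3 : ∀ j ∈ Finset.Icc (s+1) x,
      (∑ i ∈ Finset.Icc 1 s, moebius i * moebius j * (if (i * j) ∣ x then (1:ℤ) else 0))
        = moebius j * (if j = x then 1 else 0) := by
    intro j hj
    simp only [Finset.mem_Icc] at hj
    have hext : (∑ i ∈ Finset.Icc 1 x, moebius i * moebius j * (if (i * j) ∣ x then (1:ℤ) else 0))
        = ∑ i ∈ Finset.Icc 1 s, moebius i * moebius j * (if (i * j) ∣ x then (1:ℤ) else 0) := by
      rw [hsplit]
      have : (∑ i ∈ Finset.Icc (s+1) x,
          moebius i * moebius j * (if (i * j) ∣ x then (1:ℤ) else 0)) = 0 := by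
        apply Finset.sum_eq_zero
        intro i hi
        simp only [Finset.mem_Icc] at hi
        have : ¬ (i * j ∣ x) := by
          intro h
          have hle : i * j ≤ x := Nat.le_of_dvd (by omega) h
          nlinarith
        simp [this]
      rw [this, add_zero]
    rw [← hext]
    calc (∑ i ∈ Finset.Icc 1 x, moebius i * moebius j * (if (i * j) ∣ x then (1:ℤ) else 0))
        = moebius j * ∑ i ∈ Finset.Icc 1 x, moebius i * (if (j * i) ∣ x then (1:ℤ) else 0) := by
          rw [Finset.mul_sum]; apply Finset.sum_congr rfl; intro i _
          rw [mul_comm i j]; ring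
      _ = moebius j * (if j = x then 1 else 0) := by rw [gfull x hx j]
  rw [Finset.sum_congr rfl step3]
  have hxmem : x ∈ Finset.Icc (s+1) x := by simp [Finset.mem_Icc]; omega
  have : (∑ j ∈ Finset.Icc (s+1) x, moebius j * (if j = x then (1:ℤ) else 0))
      = ∑ j ∈ Finset.Icc (s+1) x, (if j = x then (moebius j : ℤ) else 0) := by
    apply Finset.sum_congr rfl; intro j _; split <;> simp
  rw [this, Finset.sum_ite_eq' _ x (fun j => (moebius j : ℤ)), if_pos hxmem]
end
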